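/- Let M, a, s be positive integers with M > 1 such that the sum of M consecutive squares starting at a^2 is a perfect square, i.e. ∑_{i=0}^{M-1} (a+i)^2 = s^2. If M = 24·m₁ for a positive integer m₁, then for every integer i ≥ 2 one has m₁ ≢ 2^(2i-3) (mod 2^(2i-2)). -/

import Mathlib

/-!
For even `M`, `6 · ∑_{i<M} (a+i)² = M · T` with `T` odd. If `M = 24 m₁` and
`m₁ = 2^(2i-3) · u` with `u` odd, this gives `s² = 2^(2i-1) · u · T`, a square
whose 2-adic valuation is odd.
-/

theorem six_mul_sum_range_succ_sq (a n : ℕ) :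
    6 * ∑ i ∈ Finset.range (n + 1), (a + i) ^ 2
      = (n + 1) * (6 * a ^ 2 + 6 * a * n + n * (2 * n + 1)) := by
  induction n with
  | zero => simp
  | succ n ih =>
    rw [Finset.sum_range_succ, Nat.mul_add, ih]
    ring

theorem odd_six_mul_sq_add (a : ℕ) {n : ℕ} (hn : Odd n) :
    Odd (6 * a ^ 2 + 6 * a * n + n * (2 * n + 1)) := by
  have h6 : Even (6 * a ^ 2 + 6 * a * n) := ⟨3 * a ^ 2 + 3 * a * n, by ring⟩
  exact h6.add_odd (hn.mul (odd_two_mul_add_one n))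

theorem Nat.exists_eq_pow_mul_of_modEq_pow {p m k : ℕ} (hp : 1 < p)
    (h : m ≡ p ^ k [MOD p ^ (k + 1)]) : ∃ u, ¬ p ∣ u ∧ m = p ^ k * u := by
  have hlt : p ^ k < p ^ (k + 1) := Nat.pow_lt_pow_right hp k.lt_succ_self
  refine ⟨p * (m / p ^ (k + 1)) + 1, ?_, ?_⟩
  · rw [Nat.dvd_add_right (dvd_mul_right p _)]
    exact Nat.dvd_one.not.mpr hp.ne'
  · have hmod : m % p ^ (k + 1) = p ^ k := by rw [h, Nat.mod_eq_of_lt hlt]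
    conv_lhs => rw [← Nat.div_add_mod m (p ^ (k + 1)), hmod]
    ring

theorem Nat.Prime.pow_mul_ne_sq {p k u : ℕ} (hp : p.Prime) (hk : Odd k) (hu : ¬ p ∣ u)
    (s : ℕ) : p ^ k * u ≠ s ^ 2 := by
  have := Fact.mk hp
  intro h
  have hu0 : u ≠ 0 := by rintro rfl; exact hu (dvd_zero p)
  have hval := congrArg (padicValNat p) h
  rw [padicValNat.mul (pow_ne_zero k hp.ne_zero) hu0, padicValNat.prime_pow,
    padicValNat.eq_zero_of_not_dvd hu, padicValNat.pow] at hval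
  exact Nat.not_even_iff_odd.mpr hk ⟨padicValNat p s, by omega⟩

theorem stmt_general (M a s m₁ : ℕ)
    (hsum : ∑ i ∈ Finset.range M, (a + i) ^ 2 = s ^ 2)
    (hMeq : M = 24 * m₁) :
    ∀ i : ℕ, 2 ≤ i → ¬ m₁ ≡ 2 ^ (2 * i - 3) [MOD 2 ^ (2 * i - 2)] := by
  intro i hi hmod
  rw [show 2 * i - 2 = 2 * i - 3 + 1 by omega] at hmod
  obtain ⟨u, hu, rfl⟩ := Nat.exists_eq_pow_mul_of_modEq_pow one_lt_two hmod
  have hu0 : u ≠ 0 := by rintro rfl; exact hu (dvd_zero 2)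
  obtain ⟨n, rfl⟩ : ∃ n, M = n + 1 := Nat.exists_eq_succ_of_ne_zero (by simp [hMeq, hu0])
  have hn : Odd n := Nat.odd_iff.mpr (by omega)
  set T := 6 * a ^ 2 + 6 * a * n + n * (2 * n + 1)
  have hT : ¬ 2 ∣ T := (odd_six_mul_sq_add a hn).not_two_dvd_nat
  have hsq : 2 ^ (2 * i - 3 + 2) * (u * T) = s ^ 2 := by
    apply Nat.eq_of_mul_eq_mul_left (show 0 < 6 by norm_num)
    rw [← hsum, six_mul_sum_range_succ_sq, hMeq]
    ring
  refine Nat.prime_two.pow_mul_ne_sq ?_ ?_ s hsq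
  · exact Nat.odd_iff.mpr (by omega)
  · exact Nat.prime_two.not_dvd_mul hu hT

theorem stmt (M a s m₁ : ℕ) (hM : 1 < M) (ha : 1 ≤ a) (hs : 1 ≤ s)
    (hsum : ∑ i ∈ Finset.range M, (a + i) ^ 2 = s ^ 2)
    (hm : 1 ≤ m₁) (hMeq : M = 24 * m₁) :
    ∀ i : ℕ, 2 ≤ i → ¬ m₁ ≡ 2 ^ (2 * i - 3) [MOD 2 ^ (2 * i - 2)] :=
  stmt_general M a s m₁ hsum hMeq
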